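/- In the linear case f(x) = λx, every solution x of the controlled system with x(0) = x₀ satisfies x(2kτ) = αᵏ·x₀ for all k ∈ ℕ, where α = e^{λτ}·(e^{λτ} + ελτ). In particular x(2τ) = e^{λτ}·(e^{λτ} + ελτ)·x₀. -/

import Mathlib

/-! On each half-period the solution follows `ẋ = λx + c·e^{λ(t-a)}`, whose solutions are
`e^{λ(t-a)}(x(a) + c(t-a))`. On `[2kτ, (2k+1)τ]` the forcing vanishes, so `x` grows by `e^{λτ}`;
on the next half-period the delayed velocity `λ x(t-τ)` is exactly such a forcing with
`c = ελ x(2kτ)`. Over one period `x(2kτ)` is therefore multiplied by `e^{λτ}(e^{λτ} + ελτ)`. -/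

open Set Real

/-- A solution of the ODFC system based on a delayed velocity term:
`ẋ(t) = f(x(t)) + ε(t)·ẋ(t−τ)` with `ε(t) = 0` on `[2kτ,(2k+1)τ)` and
`ε(t) = ε` on `[(2k+1)τ,(2k+2)τ)`, with initial value `x₀`. -/
def IsSolVel (f : ℝ → ℝ) (ε τ x₀ : ℝ) (x : ℝ → ℝ) : Prop :=
  ContinuousOn x (Set.Ici 0) ∧ x 0 = x₀ ∧
  (∀ k : ℕ, ∀ t ∈ Set.Ico (2 * (k : ℝ) * τ) ((2 * (k : ℝ) + 1) * τ),
      HasDerivWithinAt x (f (x t)) (Set.Ici t) t) ∧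
  (∀ k : ℕ, ∀ t ∈ Set.Ico ((2 * (k : ℝ) + 1) * τ) ((2 * (k : ℝ) + 2) * τ),
      HasDerivWithinAt x (f (x t) + ε * derivWithin x (Set.Ici (t - τ)) (t - τ))
        (Set.Ici t) t)

theorem eq_exp_mul_of_hasDerivWithinAt_Ici {x : ℝ → ℝ} {lam c a b : ℝ}
    (hcont : ContinuousOn x (Icc a b))
    (hderiv : ∀ s ∈ Ico a b,
      HasDerivWithinAt x (lam * x s + c * exp (lam * (s - a))) (Ici s) s) :
    ∀ s ∈ Icc a b, x s = exp (lam * (s - a)) * (x a + c * (s - a)) := by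
  have hexp : ∀ s, HasDerivAt (fun u => exp (-(lam * (u - a))))
      (-lam * exp (-(lam * (s - a)))) s := fun s =>
    ((((hasDerivAt_id s).sub_const a).const_mul lam).neg).exp.congr_deriv
      (by simp only [Pi.neg_apply, id]; ring)
  have hscaled : ∀ s ∈ Icc a b, exp (-(lam * (s - a))) * x s = x a + c * (s - a) := by
    refine eq_of_has_deriv_right_eq (f' := fun _ => c) (fun s hs => ?_) (fun s _ => ?_)
      (((continuous_exp.comp (by fun_prop)).continuousOn).mul hcont) (by fun_prop) (by simp)
    · refine ((hexp s).hasDerivWithinAt.mul (hderiv s hs)).congr_deriv ?_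
      have hinv : exp (-(lam * (s - a))) * exp (lam * (s - a)) = 1 := by
        rw [← exp_add, neg_add_cancel, exp_zero]
      linear_combination c * hinv
    · simpa using (((hasDerivAt_id s).sub_const a).const_mul c).const_add (x a) |>.hasDerivWithinAt
  intro s hs
  rw [← hscaled s hs, ← mul_assoc, ← exp_add, add_neg_cancel, exp_zero, one_mul]

namespace IsSolVel

variable {lam ε τ x₀ : ℝ} {x : ℝ → ℝ}

theorem apply_eq_exp_mul_of_mem_Icc (hx : IsSolVel (fun y => lam * y) ε τ x₀ x) (hτ : 0 ≤ τ)
    (k : ℕ) {s : ℝ} (hs : s ∈ Icc (2 * (k : ℝ) * τ) ((2 * (k : ℝ) + 1) * τ)) :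
    x s = exp (lam * (s - 2 * k * τ)) * x (2 * k * τ) := by
  have h := eq_exp_mul_of_hasDerivWithinAt_Ici (c := 0)
    (hx.1.mono fun t ht => le_trans (by positivity) ht.1)
    (fun t ht => by simpa using hx.2.2.1 k t ht) s hs
  simpa using h

theorem hasDerivWithinAt_of_mem_Ico_forced (hx : IsSolVel (fun y => lam * y) ε τ x₀ x)
    (hτ : 0 ≤ τ) (k : ℕ) {t : ℝ}
    (ht : t ∈ Ico ((2 * (k : ℝ) + 1) * τ) ((2 * (k : ℝ) + 2) * τ)) :
    HasDerivWithinAt x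
      (lam * x t + ε * lam * x (2 * k * τ) * exp (lam * (t - (2 * k + 1) * τ))) (Ici t) t := by
  have hfree : t - τ ∈ Ico (2 * (k : ℝ) * τ) ((2 * (k : ℝ) + 1) * τ) :=
    ⟨by linarith [ht.1], by linarith [ht.2]⟩
  have hdelay : derivWithin x (Ici (t - τ)) (t - τ) = lam * x (t - τ) :=
    (hx.2.2.1 k (t - τ) hfree).derivWithin (uniqueDiffOn_Ici _ _ self_mem_Ici)
  convert hx.2.2.2 k t ht using 1
  rw [hdelay, hx.apply_eq_exp_mul_of_mem_Icc hτ k (Ico_subset_Icc_self hfree)]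
  ring_nf

theorem apply_two_mul_succ (hx : IsSolVel (fun y => lam * y) ε τ x₀ x) (hτ : 0 ≤ τ)
    (k : ℕ) :
    x (2 * ((k + 1 : ℕ) : ℝ) * τ) =
      exp (lam * τ) * (exp (lam * τ) + ε * lam * τ) * x (2 * k * τ) := by
  have hmid : x ((2 * k + 1) * τ) = exp (lam * τ) * x (2 * k * τ) := by
    rw [hx.apply_eq_exp_mul_of_mem_Icc hτ k ⟨by linarith, le_rfl⟩]
    ring_nf
  have hforced := eq_exp_mul_of_hasDerivWithinAt_Ici
    (hx.1.mono fun t ht => le_trans (by positivity) ht.1)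
    (fun t ht => hx.hasDerivWithinAt_of_mem_Ico_forced hτ k ht)
    ((2 * k + 2) * τ) ⟨by linarith, le_rfl⟩
  rw [show 2 * ((k + 1 : ℕ) : ℝ) * τ = (2 * k + 2) * τ by push_cast; ring, hforced, hmid]
  ring_nf

end IsSolVel

theorem odfc_velocity_linear_period_iterates_general
    (lam ε τ x₀ : ℝ) (hτ : 0 < τ)
    (x : ℝ → ℝ) (hx : IsSolVel (fun y => lam * y) ε τ x₀ x) :
    (∀ k : ℕ, x (2 * (k : ℝ) * τ) =
        (Real.exp (lam * τ) * (Real.exp (lam * τ) + ε * lam * τ)) ^ k * x₀) ∧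
    x (2 * τ) = Real.exp (lam * τ) * (Real.exp (lam * τ) + ε * lam * τ) * x₀ := by
  have hiter : ∀ k : ℕ, x (2 * (k : ℝ) * τ) =
      (exp (lam * τ) * (exp (lam * τ) + ε * lam * τ)) ^ k * x₀ := by
    intro k
    induction k with
    | zero => simpa using hx.2.1
    | succ n ih => rw [hx.apply_two_mul_succ hτ.le n, ih, pow_succ]; ring
  exact ⟨hiter, by simpa using hiter 1⟩

/-- In the linear case `f(x) = λx`, any solution of the velocity-based ODFC system
satisfies `x(2kτ) = αᵏ·x₀` with `α = e^{λτ}(e^{λτ} + ελτ)`; in particular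
`x(2τ) = e^{λτ}(e^{λτ} + ελτ)·x₀`. -/
theorem odfc_velocity_linear_period_iterates
    (lam ε τ x₀ : ℝ) (hlam : 0 < lam) (hτ : 0 < τ)
    (x : ℝ → ℝ) (hx : IsSolVel (fun y => lam * y) ε τ x₀ x) :
    (∀ k : ℕ, x (2 * (k : ℝ) * τ) =
        (Real.exp (lam * τ) * (Real.exp (lam * τ) + ε * lam * τ)) ^ k * x₀) ∧
    x (2 * τ) = Real.exp (lam * τ) * (Real.exp (lam * τ) + ε * lam * τ) * x₀ :=
  odfc_velocity_linear_period_iterates_general lam ε τ x₀ hτ x hx
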